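/- If a finite partial order is up-regular, then it contains no induced suborder isomorphic to O_obs1: there do not exist four distinct elements a, b, c, d with a < b, c < d, and all four of the pairs (a,c), (a,d), (b,c), (b,d) incomparable. -/

import Mathlib

variable {P : Type*} [PartialOrder P]

/-- Two elements of a partial order are incomparable if neither is `≤` the other. -/
def Incomp (x y : P) : Prop := x ≠ y ∧ ¬x ≤ y ∧ ¬y ≤ x

/-- The level of an element `x` of a finite partial order: one less than the maximum
cardinality of a chain whose greatest element is `x`. -/
noncomputable def level [Fintype P] (x : P) : ℕ :=
  sSup {n : ℕ | ∃ C : Finset P,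
    IsChain (· ≤ ·) (C : Set P) ∧ x ∈ C ∧ (∀ y ∈ C, y ≤ x) ∧ C.card = n} - 1

/-- A finite partial order is up-regular if every element stands in the same order
relation to any two elements of equal level above its own level. -/
def UpRegular (P : Type*) [PartialOrder P] [Fintype P] : Prop :=
  ∀ x y z : P, level x < level y → level y = level z →
    ((x < y ↔ x < z) ∧ (y < x ↔ z < x))

section Aux

variable [Fintype P]

def chainSet (x : P) : Set ℕ := {n : ℕ | ∃ C : Finset P,
    IsChain (· ≤ ·) (C : Set P) ∧ x ∈ C ∧ (∀ y ∈ C, y ≤ x) ∧ C.card = n}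

lemma one_mem_chainSet (x : P) : 1 ∈ chainSet x := by
  refine ⟨{x}, ?_, by simp, by simp, by simp⟩
  intro a ha b hb hne
  simp only [Finset.coe_singleton, Set.mem_singleton_iff] at ha hb
  subst ha; subst hb; exact absurd rfl hne

lemma bddAbove_chainSet (x : P) : BddAbove (chainSet x) :=
  ⟨Fintype.card P, fun n ⟨C, _, _, _, hc⟩ => hc ▸ Finset.card_le_univ C⟩

lemma level_add_one (x : P) : level x + 1 = sSup (chainSet x) := by
  have h1 : 1 ≤ sSup (chainSet x) :=
    le_csSup (bddAbove_chainSet x) (one_mem_chainSet x)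
  unfold level
  have : sSup {n : ℕ | ∃ C : Finset P,
      IsChain (· ≤ ·) (C : Set P) ∧ x ∈ C ∧ (∀ y ∈ C, y ≤ x) ∧ C.card = n}
      = sSup (chainSet x) := rfl
  omega

lemma level_succ_mem (x : P) : level x + 1 ∈ chainSet x := by
  rw [level_add_one]
  exact Nat.sSup_mem ⟨1, one_mem_chainSet x⟩ (bddAbove_chainSet x)

lemma mem_le_level {x : P} {n : ℕ} (hn : n ∈ chainSet x) : n ≤ level x + 1 := by
  rw [level_add_one]; exact le_csSup (bddAbove_chainSet x) hn

lemma level_lt_of_lt {x y : P} (hxy : x < y) : level x < level y := by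
  classical
  obtain ⟨C, hC, hxC, hle, hcard⟩ := level_succ_mem x
  have hy : y ∉ C := fun hy => absurd (hle y hy) (not_le_of_gt hxy)
  have hmem : (level x + 1) + 1 ∈ chainSet y := by
    refine ⟨insert y C, ?_, Finset.mem_insert_self _ _, ?_, ?_⟩
    · rw [Finset.coe_insert]
      exact hC.insert (fun b hb _ => Or.inr ((hle b hb).trans hxy.le))
    · intro z hz
      rcases Finset.mem_insert.mp hz with h | h
      · exact h.le
      · exact (hle z h).trans hxy.le
    · rw [Finset.card_insert_of_notMem hy, hcard]
  have := mem_le_level hmem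
  omega

lemma exists_lt_level_eq {x : P} {n : ℕ} (hx : level x = n + 1) :
    ∃ y, y < x ∧ level y = n := by
  classical
  obtain ⟨C, hC, hxC, hle, hcard⟩ := level_succ_mem x
  have hcard' : (C.erase x).card = n + 1 := by
    rw [Finset.card_erase_of_mem hxC, hcard, hx]
    omega
  have hne : (C.erase x).Nonempty := Finset.card_pos.mp (by omega)
  obtain ⟨y, hyC, hmax'⟩ := Finset.exists_maximal hne
  have hmax : ∀ z ∈ C.erase x, ¬ y < z := fun z hz hlt => not_le_of_gt hlt (hmax' hz hlt.le)
  have hyx : y < x :=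
    lt_of_le_of_ne (hle y (Finset.mem_of_mem_erase hyC))
      (Finset.ne_of_mem_erase hyC)
  have hymax : ∀ z ∈ C.erase x, z ≤ y := by
    intro z hz
    rcases eq_or_ne z y with rfl | hne'
    · exact le_refl z
    · rcases hC (Finset.mem_coe.mpr (Finset.erase_subset _ _ hz))
        (Finset.mem_coe.mpr (Finset.erase_subset _ _ hyC)) hne' with h | h
      · exact h
      · exact absurd (lt_of_le_of_ne h hne'.symm) (hmax z hz)
  have hmem : n + 1 ∈ chainSet y := by
    refine ⟨C.erase x, ?_, hyC, hymax, hcard'⟩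
    exact hC.mono (Finset.coe_subset.mpr (Finset.erase_subset _ _))
  have h1 : n ≤ level y := by have := mem_le_level hmem; omega
  have h2 : level y < level x := level_lt_of_lt hyx
  exact ⟨y, hyx, by omega⟩

lemma exists_le_level_eq :
    ∀ (n : ℕ) (x : P), level x = n → ∀ k ≤ n, ∃ y, y ≤ x ∧ level y = k := by
  intro n
  induction n with
  | zero => intro x hx k hk; exact ⟨x, le_refl x, by omega⟩
  | succ m ih =>
    intro x hx k hk
    rcases Nat.eq_or_lt_of_le hk with heq | hlt
    · exact ⟨x, le_refl x, by omega⟩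
    · obtain ⟨y, hyx, hy⟩ := exists_lt_level_eq hx
      obtain ⟨z, hzy, hz⟩ := ih y hy k (by omega)
      exact ⟨z, hzy.trans hyx.le, hz⟩

end Aux

/-- If a finite partial order is up-regular, then it contains no induced suborder
isomorphic to `O_obs1` ('2+2'): there are no four elements `a, b, c, d` with
`a < b`, `c < d`, and all four pairs `(a,c)`, `(a,d)`, `(b,c)`, `(b,d)`
incomparable. -/
theorem upRegular_no_obs1 (P : Type*) [PartialOrder P] [Fintype P]
    (h : UpRegular P) :
    ¬∃ a b c d : P, a < b ∧ c < d ∧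
      Incomp a c ∧ Incomp a d ∧ Incomp b c ∧ Incomp b d := by
  rintro ⟨a, b, c, d, hab, hcd, ⟨_, hac, hca⟩, ⟨_, had, hda⟩, ⟨_, hbc, hcb⟩, ⟨_, hbd, hdb⟩⟩
  rcases le_total (level b) (level d) with hbd' | hdb'
  · obtain ⟨d', hd'd, hd'⟩ := exists_le_level_eq (level d) d rfl (level b) hbd'
    have hlt : a < d' := (h a b d' (level_lt_of_lt hab) hd'.symm).1.mp hab
    exact had (hlt.le.trans hd'd)
  · obtain ⟨b', hb'b, hb'⟩ := exists_le_level_eq (level b) b rfl (level d) hdb'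
    have hlt : c < b' := (h c d b' (level_lt_of_lt hcd) hb'.symm).1.mp hcd
    exact hcb (hlt.le.trans hb'b)
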